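/- For every integer k ≥ 0, the tree L(k) satisfies lmw(L(k)) = k. -/

import Mathlib

open scoped Classical

noncomputable section

namespace LMW

variable {V : Type*} [Fintype V]

/-- The bipartite graph `G[Vᵢ, V̄ᵢ]` consisting of the edges of `G` crossing the cut at
position `i` of the linear layout `σ` (here `Vᵢ` is the set of the first `i` vertices
in the layout). -/
def cutGraph (G : SimpleGraph V) (σ : V ≃ Fin (Fintype.card V)) (i : ℕ) : SimpleGraph V where
  Adj u v := G.Adj u v ∧
    (((σ u : ℕ) < i ∧ i ≤ (σ v : ℕ)) ∨ ((σ v : ℕ) < i ∧ i ≤ (σ u : ℕ)))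
  symm := by
    constructor
    intro u v h
    exact ⟨h.1.symm, h.2.symm⟩
  loopless := by
    constructor
    intro u h
    exact G.irrefl h.1

/-- `M` is an induced matching in `H`: a set of edges of `H` such that any two distinct
edges of `M` share no endpoint and no endpoint of one is adjacent in `H` to an endpoint
of the other. -/
def IsInducedMatching (H : SimpleGraph V) (M : Finset (Sym2 V)) : Prop :=
  (↑M : Set (Sym2 V)) ⊆ H.edgeSet ∧
    ∀ e ∈ M, ∀ f ∈ M, e ≠ f → ∀ u ∈ e, ∀ v ∈ f, u ≠ v ∧ ¬ H.Adj u v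

/-- `mim H` is the size of a maximum induced matching of `H`. -/
def mim (H : SimpleGraph V) : ℕ :=
  sSup {n : ℕ | ∃ M : Finset (Sym2 V), IsInducedMatching H M ∧ M.card = n}

/-- The MIM-width of `G` under the linear layout `σ`: the maximum over all cuts
`1 ≤ i < |V|` of the size of a maximum induced matching of the cut graph. -/
def mw (G : SimpleGraph V) (σ : V ≃ Fin (Fintype.card V)) : ℕ :=
  (Finset.Ico 1 (Fintype.card V)).sup fun i => mim (cutGraph G σ i)

/-- The linear MIM-width of `G`: the minimum of `mw G σ` over all linear layouts `σ`. -/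
def lmw (G : SimpleGraph V) : ℕ :=
  sInf {m : ℕ | ∃ σ : V ≃ Fin (Fintype.card V), mw G σ = m}

/-- Vertex type of the tree `L k`:  `L 0` is a single vertex; `L (k+1)` consists of a root
`u = Sum.inl ()`, three children `vᵢ = Sum.inr (i, Sum.inl ())` and, below each `vᵢ`, a copy
of `L k` whose vertices are `Sum.inr (i, Sum.inr a)`. -/
def LV : ℕ → Type
  | 0 => Unit
  | k + 1 => Unit ⊕ (Fin 3 × (Unit ⊕ LV k))

instance instDecEqLV : ∀ k, DecidableEq (LV k)
  | 0 => inferInstanceAs (DecidableEq Unit)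
  | k + 1 =>
    letI := instDecEqLV k
    inferInstanceAs (DecidableEq (Unit ⊕ (Fin 3 × (Unit ⊕ LV k))))

instance instFintypeLV : ∀ k, Fintype (LV k)
  | 0 => inferInstanceAs (Fintype Unit)
  | k + 1 =>
    letI := instFintypeLV k
    inferInstanceAs (Fintype (Unit ⊕ (Fin 3 × (Unit ⊕ LV k))))

/-- The root of `L k`. -/
def Lroot : ∀ k, LV k
  | 0 => ()
  | _ + 1 => Sum.inl ()

/-- The tree `L k`: the root `u` is adjacent to the three children `vᵢ`, each child `vᵢ` is
adjacent to the root of the `i`-th copy of `L k`, and within each copy the edges are those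
of `L k`. -/
def Lgraph : ∀ k, SimpleGraph (LV k)
  | 0 => ⊥
  | k + 1 => SimpleGraph.fromRel (fun x y : LV (k + 1) =>
      (∃ i : Fin 3, x = Sum.inl () ∧ y = Sum.inr (i, Sum.inl ())) ∨
      (∃ i : Fin 3, x = Sum.inr (i, Sum.inl ()) ∧ y = Sum.inr (i, Sum.inr (Lroot k))) ∨
      (∃ (i : Fin 3) (a b : LV k), x = Sum.inr (i, Sum.inr a) ∧ y = Sum.inr (i, Sum.inr b) ∧
        (Lgraph k).Adj a b))

end LMW

/-
Upper bound: lay out `u` first and then, for each `i`, the copy of `L k` below `vᵢ` (laid out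
recursively) followed by `vᵢ`. At a cut inside the `j`-th block every crossing edge outside that
copy meets the crossing edge `u vⱼ`, so an induced matching uses at most one such edge besides at
most `k` edges inside the copy.

Lower bound, by induction: suppose a layout of `L (k+1)` had width `k`. Inside each copy some cut
carries an induced matching of size `k`; no edge away from that copy and its `vᵢ` may cross the
cut, since it would extend the matching, so the connected rest of the tree lies on one side of
it. Two of the three copies see `u` on the same side of their cuts; then each of them lies on
that side of the other's cut, although it straddles its own.
-/

namespace LMW

section InducedMatching

variable {V W : Type*} {H : SimpleGraph V} {H' : SimpleGraph W} {M : Finset (Sym2 V)}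

lemma isInducedMatching_empty (H : SimpleGraph V) : IsInducedMatching H ∅ :=
  ⟨by simp, by simp⟩

lemma bddAbove_card_isInducedMatching [Fintype V] (H : SimpleGraph V) :
    BddAbove {n : ℕ | ∃ M : Finset (Sym2 V), IsInducedMatching H M ∧ M.card = n} :=
  ⟨Fintype.card (Sym2 V), by rintro n ⟨M, -, rfl⟩; exact M.card_le_univ⟩

lemma IsInducedMatching.card_le_mim [Fintype V] (hM : IsInducedMatching H M) : M.card ≤ mim H :=
  le_csSup (bddAbove_card_isInducedMatching H) ⟨M, hM, rfl⟩

lemma mim_le_of_forall {n : ℕ} (h : ∀ M, IsInducedMatching H M → M.card ≤ n) :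
    mim H ≤ n :=
  csSup_le ⟨0, ∅, isInducedMatching_empty H, rfl⟩ (by rintro m ⟨M, hM, rfl⟩; exact h M hM)

lemma exists_isInducedMatching_card_eq_mim [Fintype V] (H : SimpleGraph V) :
    ∃ M : Finset (Sym2 V), IsInducedMatching H M ∧ M.card = mim H :=
  Nat.sSup_mem (s := {n | ∃ M, IsInducedMatching H M ∧ M.card = n})
    ⟨0, ∅, isInducedMatching_empty H, rfl⟩ (bddAbove_card_isInducedMatching H)

lemma mim_eq_zero_of_edgeSet_eq_empty (h : H.edgeSet = ∅) : mim H = 0 :=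
  Nat.le_zero.mp <| mim_le_of_forall fun M hM => by
    simpa [Finset.eq_empty_iff_forall_notMem, h] using hM.1

lemma exists_adj_of_mim_pos [Fintype V] (h : 0 < mim H) : ∃ a b, H.Adj a b := by
  obtain ⟨M, hM, hcard⟩ := exists_isInducedMatching_card_eq_mim H
  obtain ⟨e, he⟩ := Finset.card_pos.mp (hcard ▸ h)
  induction e using Sym2.ind with
  | _ a b => exact ⟨a, b, hM.1 he⟩

lemma IsInducedMatching.map {M' : Finset (Sym2 W)} (f : H' ↪g H)
    (hM' : IsInducedMatching H' M') : IsInducedMatching H (M'.map f.toEmbedding.sym2Map) := by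
  refine ⟨?_, ?_⟩
  · intro e he
    obtain ⟨e', he', rfl⟩ := Finset.mem_map.mp he
    exact f.map_mem_edgeSet_iff.mpr (hM'.1 he')
  · simp only [Finset.mem_map]
    rintro _ ⟨e, he, rfl⟩ _ ⟨e', he', rfl⟩ hne u hu v hv
    obtain ⟨a, ha, rfl⟩ := Sym2.mem_map.mp hu
    obtain ⟨b, hb, rfl⟩ := Sym2.mem_map.mp hv
    have := hM'.2 e he e' he' (fun h => hne (h ▸ rfl)) a ha b hb
    exact ⟨f.injective.ne this.1, f.map_adj_iff.not.mpr this.2⟩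

lemma IsInducedMatching.comap (f : H' ↪g H) (hM : IsInducedMatching H M) :
    IsInducedMatching H' (M.preimage (Sym2.map f) (Sym2.map.injective f.injective).injOn) := by
  refine ⟨fun e he => f.map_mem_edgeSet_iff.mp (hM.1 (Finset.mem_preimage.mp he)), ?_⟩
  intro e he e' he' hne u hu v hv
  have := hM.2 _ (Finset.mem_preimage.mp he) _ (Finset.mem_preimage.mp he')
    ((Sym2.map.injective f.injective).ne hne) (f u) (Sym2.mem_map.mpr ⟨u, hu, rfl⟩)
    (f v) (Sym2.mem_map.mpr ⟨v, hv, rfl⟩)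
  exact ⟨fun h => this.1 (h ▸ rfl), fun h => this.2 (f.map_adj_iff.mpr h)⟩

lemma IsInducedMatching.insert (hM : IsInducedMatching H M) {x y : V} (hxy : H.Adj x y)
    (hfar : ∀ e ∈ M, ∀ v ∈ e, ∀ u ∈ s(x, y), u ≠ v ∧ ¬ H.Adj u v) :
    IsInducedMatching H (insert s(x, y) M) := by
  refine ⟨?_, ?_⟩
  · rw [Finset.coe_insert]
    exact Set.insert_subset hxy hM.1
  · simp only [Finset.mem_insert]
    rintro e (rfl | he) f (rfl | hf) hne u hu v hv
    · exact absurd rfl hne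
    · exact hfar f hf v hv u hu
    · have := hfar e he u hu v hv
      exact ⟨this.1.symm, fun h => this.2 h.symm⟩
    · exact hM.2 e he f hf hne u hu v hv

lemma mim_add_one_le [Fintype V] [Fintype W] (f : H' ↪g H) {x y : V} (hxy : H.Adj x y)
    (hx : ∀ a, x ≠ f a ∧ ¬ H.Adj x (f a)) (hy : ∀ a, y ≠ f a ∧ ¬ H.Adj y (f a)) :
    mim H' + 1 ≤ mim H := by
  obtain ⟨M', hM', hcard⟩ := exists_isInducedMatching_card_eq_mim H'
  have hfar : ∀ e ∈ M'.map f.toEmbedding.sym2Map, ∀ v ∈ e, ∀ u ∈ s(x, y),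
      u ≠ v ∧ ¬ H.Adj u v := by
    simp only [Finset.mem_map]
    rintro _ ⟨e, -, rfl⟩ v hv u hu
    obtain ⟨a, -, rfl⟩ := Sym2.mem_map.mp hv
    rcases Sym2.mem_iff.mp hu with rfl | rfl
    exacts [hx a, hy a]
  have hnew : s(x, y) ∉ M'.map f.toEmbedding.sym2Map := fun h =>
    (hfar _ h x (Sym2.mem_mk_left x y) x (Sym2.mem_mk_left x y)).1 rfl
  have := ((hM'.map f).insert hxy hfar).card_le_mim
  rwa [Finset.card_insert_of_notMem hnew, Finset.card_map, hcard] at this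

/-- An induced matching contains at most one edge meeting the edge `xy`. -/
lemma mim_le_mim_add_one [Fintype W] (f : H' ↪g H) {x y : V} (hxy : H.Adj x y)
    (hcover : ∀ a b, H.Adj a b → a ∉ Set.range f → a = x ∨ a = y ∨ b = x ∨ b = y) :
    mim H ≤ mim H' + 1 := by
  refine mim_le_of_forall fun M hM => ?_
  have hinside : (M.filter (· ∈ Set.range (Sym2.map f))).card ≤ mim H' := by
    rw [← Finset.card_preimage]
    exact (hM.comap f).card_le_mim
  have hmeet : ∀ e ∈ M, e ∉ Set.range (Sym2.map f) → ∃ p ∈ e, p = x ∨ p = y := by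
    intro e he hout
    induction e using Sym2.ind with
    | _ a b =>
      have hab : H.Adj a b := hM.1 he
      by_cases ha : a ∈ Set.range f
      · obtain ⟨a', rfl⟩ := ha
        have hb : b ∉ Set.range f := by
          rintro ⟨b', rfl⟩
          exact hout ⟨s(a', b'), rfl⟩
        rcases hcover b _ hab.symm hb with h | h | h | h
        exacts [⟨b, by simp, .inl h⟩, ⟨b, by simp, .inr h⟩, ⟨_, by simp, .inl h⟩,
          ⟨_, by simp, .inr h⟩]
      · rcases hcover a b hab ha with h | h | h | h
        exacts [⟨a, by simp, .inl h⟩, ⟨a, by simp, .inr h⟩, ⟨b, by simp, .inl h⟩,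
          ⟨b, by simp, .inr h⟩]
  have houtside : (M.filter (· ∉ Set.range (Sym2.map f))).card ≤ 1 := by
    refine Finset.card_le_one.mpr fun e he e' he' => by_contra fun hne => ?_
    rw [Finset.mem_filter] at he he'
    obtain ⟨p, hp, hpxy⟩ := hmeet e he.1 he.2
    obtain ⟨q, hq, hqxy⟩ := hmeet e' he'.1 he'.2
    have := hM.2 e he.1 e' he'.1 hne p hp q hq
    rcases hpxy with rfl | rfl <;> rcases hqxy with rfl | rfl
    exacts [this.1 rfl, this.2 hxy, this.2 hxy.symm, this.1 rfl]
  rw [← Finset.card_filter_add_card_filter_not (· ∈ Set.range (Sym2.map f))]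
  omega

end InducedMatching

section Layout

variable {V W : Type*} [Fintype V] [Fintype W] {G : SimpleGraph V}
  {σ : V ≃ Fin (Fintype.card V)}

lemma cutGraph_adj_iff {i : ℕ} {u v : V} :
    (cutGraph G σ i).Adj u v ↔ G.Adj u v ∧ ¬((σ u : ℕ) < i ↔ (σ v : ℕ) < i) :=
  and_congr_right fun _ => by omega

lemma mim_cutGraph_le_mw (i : ℕ) : mim (cutGraph G σ i) ≤ mw G σ := by
  by_cases hi : i ∈ Finset.Ico 1 (Fintype.card V)
  · exact Finset.le_sup (f := fun i => mim (cutGraph G σ i)) hi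
  · have hempty : (cutGraph G σ i).edgeSet = ∅ := by
      ext e
      induction e using Sym2.ind with
      | _ u v =>
        have := (σ u).isLt
        have := (σ v).isLt
        simp only [SimpleGraph.mem_edgeSet, cutGraph_adj_iff, Set.mem_empty_iff_false,
          iff_false, not_and, Finset.mem_Ico] at hi ⊢
        omega
    simp [mim_eq_zero_of_edgeSet_eq_empty hempty]

lemma exists_le_mim_cutGraph {m : ℕ} (hm : 0 < m) (h : m ≤ mw G σ) :
    ∃ i, m ≤ mim (cutGraph G σ i) := by
  obtain ⟨i, -, hi⟩ := (Finset.le_sup_iff hm).mp h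
  exact ⟨i, hi⟩

lemma one_le_mw_of_adj {x y : V} (h : G.Adj x y) : 1 ≤ mw G σ := by
  wlog hlt : σ x < σ y generalizing x y
  · exact this h.symm ((not_lt.mp hlt).lt_of_ne (σ.injective.ne h.ne'))
  have hxy : (cutGraph G σ (σ y)).Adj x y := cutGraph_adj_iff.mpr ⟨h, by simp [hlt]⟩
  have hM : IsInducedMatching (cutGraph G σ (σ y)) {s(x, y)} :=
    ⟨by simpa using hxy, by simp +contextual⟩
  simpa using hM.card_le_mim.trans (mim_cutGraph_le_mw _)

def cutGraphEmbedding {G' : SimpleGraph W} {σ' : W ≃ Fin (Fintype.card W)} {t p : ℕ}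
    (f : G' ↪g G) (hpos : ∀ a, (σ' a : ℕ) < t ↔ (σ (f a) : ℕ) < p) :
    cutGraph G' σ' t ↪g cutGraph G σ p where
  toEmbedding := f.toEmbedding
  map_rel_iff' := by
    intro a b
    simp only [cutGraph_adj_iff, RelEmbedding.coe_toEmbedding, f.map_adj_iff, hpos]

lemma exists_layout_cuts_comap (f : W ↪ V) (σ : V ≃ Fin (Fintype.card V)) :
    ∃ σ' : W ≃ Fin (Fintype.card W),
      ∀ t, ∃ p, ∀ a, (σ' a : ℕ) < t ↔ (σ (f a) : ℕ) < p := by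
  let _ : LinearOrder W := LinearOrder.lift' (σ ∘ f) (σ.injective.comp f.injective)
  let e : Fin (Fintype.card W) ≃o W := monoEquivOfFin W rfl
  refine ⟨e.symm.toEquiv, fun t => ?_⟩
  rcases Nat.eq_zero_or_pos t with rfl | ht
  · exact ⟨0, by simp⟩
  by_cases hle : Fintype.card W < t
  · exact ⟨Fintype.card V, fun a => by simp [(e.symm a).isLt.trans hle, (σ (f a)).isLt]⟩
  let w := e ⟨t - 1, by omega⟩
  refine ⟨σ (f w) + 1, fun a => ?_⟩
  have hw : (e.symm w : ℕ) = t - 1 := by simp [w]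
  have : e.symm a ≤ e.symm w ↔ σ (f a) ≤ σ (f w) := e.symm.le_iff_le
  rw [Fin.le_def, Fin.le_def, hw] at this
  show (e.symm a : ℕ) < t ↔ _
  omega

lemma lmw_le {n : ℕ} (h : mw G σ ≤ n) : lmw G ≤ n :=
  (Nat.sInf_le (s := {m | ∃ σ, mw G σ = m}) ⟨σ, rfl⟩).trans h

lemma le_lmw {n : ℕ} (h : ∀ σ : V ≃ Fin (Fintype.card V), n ≤ mw G σ) : n ≤ lmw G :=
  le_csInf ⟨mw G (Fintype.equivFin V), _, rfl⟩ (by rintro _ ⟨σ, rfl⟩; exact h σ)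

end Layout

section Tree

variable {k : ℕ}

def Lchild (k : ℕ) (i : Fin 3) : LV (k + 1) := Sum.inr (i, Sum.inl ())

def Lcopy (i : Fin 3) (a : LV k) : LV (k + 1) := Sum.inr (i, Sum.inr a)

@[simp] lemma Lchild_ne_Lroot (i : Fin 3) : Lchild k i ≠ Lroot (k + 1) := nofun

@[simp] lemma Lcopy_ne_Lroot (i : Fin 3) (a : LV k) : Lcopy i a ≠ Lroot (k + 1) := nofun

@[simp] lemma Lcopy_ne_Lchild (i j : Fin 3) (a : LV k) : Lcopy i a ≠ Lchild k j := nofun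

@[simp] lemma Lroot_ne_Lchild (i : Fin 3) : Lroot (k + 1) ≠ Lchild k i := nofun

@[simp] lemma Lroot_ne_Lcopy (i : Fin 3) (a : LV k) : Lroot (k + 1) ≠ Lcopy i a := nofun

@[simp] lemma Lchild_ne_Lcopy (i j : Fin 3) (a : LV k) : Lchild k j ≠ Lcopy i a := nofun

@[simp] lemma Lchild_inj {i j : Fin 3} : Lchild k i = Lchild k j ↔ i = j :=
  ⟨fun h => congrArg Prod.fst (Sum.inr.inj h), fun h => h ▸ rfl⟩

@[simp] lemma Lcopy_inj {i j : Fin 3} {a b : LV k} : Lcopy i a = Lcopy j b ↔ i = j ∧ a = b :=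
  ⟨fun h => ⟨congrArg Prod.fst (Sum.inr.inj h),
      Sum.inr.inj (congrArg Prod.snd (Sum.inr.inj h))⟩,
    fun ⟨hi, ha⟩ => hi ▸ ha ▸ rfl⟩

lemma LV_succ_cases (x : LV (k + 1)) :
    x = Lroot (k + 1) ∨ (∃ i, x = Lchild k i) ∨ ∃ i a, x = Lcopy i a := by
  rcases x with ⟨⟩ | ⟨i, ⟨⟩ | a⟩
  exacts [.inl rfl, .inr (.inl ⟨i, rfl⟩), .inr (.inr ⟨i, a, rfl⟩)]

lemma Lgraph_succ_adj {x y : LV (k + 1)} : (Lgraph (k + 1)).Adj x y ↔ x ≠ y ∧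
    (((∃ i, x = Lroot (k + 1) ∧ y = Lchild k i) ∨
        (∃ i, x = Lchild k i ∧ y = Lcopy i (Lroot k)) ∨
        ∃ i a b, x = Lcopy i a ∧ y = Lcopy i b ∧ (Lgraph k).Adj a b) ∨
      ((∃ i, y = Lroot (k + 1) ∧ x = Lchild k i) ∨
        (∃ i, y = Lchild k i ∧ x = Lcopy i (Lroot k)) ∨
        ∃ i a b, y = Lcopy i a ∧ x = Lcopy i b ∧ (Lgraph k).Adj a b)) :=
  Iff.rfl

lemma Lgraph_adj_root_iff {z : LV (k + 1)} :
    (Lgraph (k + 1)).Adj (Lroot (k + 1)) z ↔ ∃ i, z = Lchild k i := by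
  rcases LV_succ_cases z with rfl | ⟨j, rfl⟩ | ⟨j, a, rfl⟩ <;>
    simp [Lgraph_succ_adj, eq_comm]

lemma Lgraph_adj_child_iff {i : Fin 3} {z : LV (k + 1)} :
    (Lgraph (k + 1)).Adj (Lchild k i) z ↔ z = Lroot (k + 1) ∨ z = Lcopy i (Lroot k) := by
  rcases LV_succ_cases z with rfl | ⟨j, rfl⟩ | ⟨j, a, rfl⟩ <;>
    simp [Lgraph_succ_adj, eq_comm]

lemma Lgraph_adj_copy_iff {i : Fin 3} {a : LV k} {z : LV (k + 1)} :
    (Lgraph (k + 1)).Adj (Lcopy i a) z ↔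
      (∃ b, z = Lcopy i b ∧ (Lgraph k).Adj a b) ∨ (a = Lroot k ∧ z = Lchild k i) := by
  rcases LV_succ_cases z with rfl | ⟨j, rfl⟩ | ⟨j, b, rfl⟩
  · simp [Lgraph_succ_adj]
  · simp [Lgraph_succ_adj, eq_comm, and_comm]
  · simpa [Lgraph_succ_adj, SimpleGraph.adj_comm, eq_comm] using fun _ h _ => h.ne

lemma Lcopy_adj_Lcopy {i : Fin 3} {a b : LV k} :
    (Lgraph (k + 1)).Adj (Lcopy i a) (Lcopy i b) ↔ (Lgraph k).Adj a b := by
  simp [Lgraph_adj_copy_iff]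

def copyEmbedding (k : ℕ) (i : Fin 3) : Lgraph k ↪g Lgraph (k + 1) where
  toFun := Lcopy i
  inj' _ _ h := (Lcopy_inj.mp h).2
  map_rel_iff' := Lcopy_adj_Lcopy

@[simp] lemma copyEmbedding_apply (i : Fin 3) (a : LV k) : copyEmbedding k i a = Lcopy i a := rfl

lemma Lgraph_reachable_Lroot : ∀ (k : ℕ) (a : LV k), (Lgraph k).Reachable (Lroot k) a
  | 0, () => .rfl
  | k + 1, x => by
    have hchild (i : Fin 3) : (Lgraph (k + 1)).Reachable (Lroot (k + 1)) (Lchild k i) :=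
      (Lgraph_adj_root_iff.mpr ⟨i, rfl⟩).reachable
    rcases LV_succ_cases x with rfl | ⟨i, rfl⟩ | ⟨i, a, rfl⟩
    · exact .rfl
    · exact hchild i
    · exact ((hchild i).trans (Lgraph_adj_child_iff.mpr (.inr rfl)).reachable).trans
        ((Lgraph_reachable_Lroot k a).map (copyEmbedding k i).toHom)

lemma card_LV_succ (k : ℕ) :
    Fintype.card (LV (k + 1)) = 1 + 3 * (Fintype.card (LV k) + 1) := by
  have := Fintype.card_congr (α := LV (k + 1)) (β := Unit ⊕ Fin 3 × (Unit ⊕ LV k)) (.refl _)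
  simp [this, add_comm]

end Tree

section UpperBound

variable {k : ℕ}

lemma add_mul_lt_add_mul_iff {m a b x y : ℕ} (ha : a < m) (hb : b < m) :
    a + m * x < b + m * y ↔ x < y ∨ x = y ∧ a < b := by
  constructor
  · intro h
    rcases lt_trichotomy x y with hxy | rfl | hxy
    · exact .inl hxy
    · exact .inr ⟨rfl, by omega⟩
    · have := Nat.mul_le_mul_left m (Nat.succ_le_of_lt hxy)
      rw [Nat.mul_succ] at this
      omega
  · rintro (hxy | ⟨rfl, hab⟩)
    · have := Nat.mul_le_mul_left m (Nat.succ_le_of_lt hxy)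
      rw [Nat.mul_succ] at this
      omega
    · omega

variable (σ : LV k ≃ Fin (Fintype.card (LV k)))

def layoutSucc : LV (k + 1) ≃ Fin (Fintype.card (LV (k + 1))) :=
  ((Equiv.sumCongr finOneEquiv.symm
    ((Equiv.prodCongr (Equiv.refl (Fin 3))
      (((Equiv.sumComm Unit (LV k)).trans (Equiv.sumCongr σ finOneEquiv.symm)).trans
        finSumFinEquiv)).trans finProdFinEquiv)).trans finSumFinEquiv).trans
    (finCongr (card_LV_succ k).symm)

lemma layoutSucc_Lroot : (layoutSucc σ (Lroot (k + 1)) : ℕ) = 0 := rfl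

lemma layoutSucc_Lchild (i : Fin 3) : (layoutSucc σ (Lchild k i) : ℕ) =
    1 + (Fintype.card (LV k) + (Fintype.card (LV k) + 1) * i) :=
  rfl

lemma layoutSucc_Lcopy (i : Fin 3) (a : LV k) :
    (layoutSucc σ (Lcopy i a) : ℕ) = 1 + (σ a + (Fintype.card (LV k) + 1) * i) :=
  rfl

-- `1 + (t + (|L k| + 1) * j)` is the cut after the first `t` vertices of the `j`-th copy.
lemma layoutSucc_Lchild_lt_iff {t : ℕ} (ht : t ≤ Fintype.card (LV k)) (j i : Fin 3) :
    (layoutSucc σ (Lchild k i) : ℕ) < 1 + (t + (Fintype.card (LV k) + 1) * j) ↔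
      (i : ℕ) < j := by
  rw [layoutSucc_Lchild, Nat.add_lt_add_iff_left, add_mul_lt_add_mul_iff (by omega) (by omega)]
  omega

lemma layoutSucc_Lcopy_lt_iff {t : ℕ} (ht : t ≤ Fintype.card (LV k)) (j i : Fin 3) (a : LV k) :
    (layoutSucc σ (Lcopy i a) : ℕ) < 1 + (t + (Fintype.card (LV k) + 1) * j) ↔
      (i : ℕ) < j ∨ (i : ℕ) = j ∧ (σ a : ℕ) < t := by
  rw [layoutSucc_Lcopy, Nat.add_lt_add_iff_left,
    add_mul_lt_add_mul_iff (Nat.lt_succ_of_lt (σ a).isLt) (by omega)]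

lemma layoutSucc_cutGraph_adj {t : ℕ} (ht : t ≤ Fintype.card (LV k)) (j : Fin 3)
    {x y : LV (k + 1)}
    (hxy : (cutGraph (Lgraph (k + 1)) (layoutSucc σ)
      (1 + (t + (Fintype.card (LV k) + 1) * j))).Adj x y)
    (hx : x ∉ Set.range (Lcopy j)) :
    x = Lroot (k + 1) ∨ x = Lchild k j ∨ y = Lroot (k + 1) ∨ y = Lchild k j := by
  obtain ⟨hxy, hside⟩ := cutGraph_adj_iff.mp hxy
  rcases LV_succ_cases x with rfl | ⟨i, rfl⟩ | ⟨i, a, rfl⟩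
  · exact .inl rfl
  · rcases Lgraph_adj_child_iff.mp hxy with rfl | rfl
    · exact .inr (.inr (.inl rfl))
    · rw [layoutSucc_Lchild_lt_iff σ ht j, layoutSucc_Lcopy_lt_iff σ ht j] at hside
      obtain rfl : i = j := Fin.ext (by omega)
      exact .inr (.inl rfl)
  · rcases Lgraph_adj_copy_iff.mp hxy with ⟨b, rfl, -⟩ | ⟨-, rfl⟩
    · have hij : (i : ℕ) ≠ j := fun h => hx ⟨a, by rw [Fin.ext h]⟩
      rw [layoutSucc_Lcopy_lt_iff σ ht j, layoutSucc_Lcopy_lt_iff σ ht j] at hside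
      omega
    · rw [layoutSucc_Lcopy_lt_iff σ ht j, layoutSucc_Lchild_lt_iff σ ht j] at hside
      obtain rfl : i = j := Fin.ext (by omega)
      exact .inr (.inr (.inr rfl))

lemma mw_layoutSucc_le : mw (Lgraph (k + 1)) (layoutSucc σ) ≤ mw (Lgraph k) σ + 1 := by
  refine Finset.sup_le fun i hi => ?_
  rw [Finset.mem_Ico, card_LV_succ] at hi
  obtain ⟨⟨j, t⟩, hjt⟩ :=
    finProdFinEquiv.surjective (⟨i - 1, by omega⟩ : Fin (3 * (Fintype.card (LV k) + 1)))
  obtain rfl : i = 1 + (t + (Fintype.card (LV k) + 1) * j) := by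
    have := congrArg Fin.val hjt
    simp only [finProdFinEquiv_apply_val] at this
    omega
  have ht := Nat.le_of_lt_succ t.isLt
  let f := cutGraphEmbedding (σ' := σ) (σ := layoutSucc σ) (t := t)
    (p := 1 + (t + (Fintype.card (LV k) + 1) * j)) (copyEmbedding k j) fun a => by
      rw [copyEmbedding_apply, layoutSucc_Lcopy_lt_iff σ ht j]
      simp
  calc _ ≤ mim (cutGraph (Lgraph k) σ t) + 1 :=
        mim_le_mim_add_one f (cutGraph_adj_iff.mpr ⟨Lgraph_adj_root_iff.mpr ⟨j, rfl⟩, by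
            simp [layoutSucc_Lroot, layoutSucc_Lchild_lt_iff σ ht j]⟩) fun x y hxy hx =>
          layoutSucc_cutGraph_adj σ ht j hxy fun ⟨a, ha⟩ => hx ⟨a, ha⟩
    _ ≤ mw (Lgraph k) σ + 1 := Nat.add_le_add_right (mim_cutGraph_le_mw t) 1

end UpperBound

lemma exists_layout_mw_le :
    ∀ k : ℕ, ∃ σ : LV k ≃ Fin (Fintype.card (LV k)), mw (Lgraph k) σ ≤ k
  | 0 => ⟨Fintype.equivFin _, by simp [mw, show Fintype.card (LV 0) = 1 from rfl]⟩
  | k + 1 =>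
    let ⟨σ, hσ⟩ := exists_layout_mw_le k
    ⟨layoutSucc σ, (mw_layoutSucc_le σ).trans (Nat.add_le_add_right hσ 1)⟩

lemma iff_of_reachable {V : Type*} {G : SimpleGraph V} {P : V → Prop}
    (hP : ∀ a b, G.Adj a b → (P a ↔ P b)) {u v : V} (h : G.Reachable u v) : P u ↔ P v := by
  obtain ⟨w⟩ := h
  induction w with
  | nil => rfl
  | cons hadj _ ih => exact (hP _ _ hadj).trans ih

section LowerBound

variable {k : ℕ} {σ : LV (k + 1) ≃ Fin (Fintype.card (LV (k + 1)))}

def Lbranch (k : ℕ) (j : Fin 3) : Set (LV (k + 1)) := insert (Lchild k j) (Set.range (Lcopy j))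

lemma exists_cut_splitting_Lcopy (hk : 0 < k) (hlow : ∀ σ', k ≤ mw (Lgraph k) σ')
    (hσ : mw (Lgraph (k + 1)) σ ≤ k) (j : Fin 3) :
    ∃ p : ℕ, (∃ a b, (σ (Lcopy j a) : ℕ) < p ∧ p ≤ σ (Lcopy j b)) ∧
      ∀ x y, (Lgraph (k + 1)).Adj x y → x ∉ Lbranch k j → y ∉ Lbranch k j →
        ((σ x : ℕ) < p ↔ (σ y : ℕ) < p) := by
  obtain ⟨σ', hσ'⟩ := exists_layout_cuts_comap (copyEmbedding k j).toEmbedding σ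
  obtain ⟨t, ht⟩ := exists_le_mim_cutGraph hk (hlow σ')
  obtain ⟨p, hp⟩ := hσ' t
  let f := cutGraphEmbedding (σ := σ) (copyEmbedding k j) hp
  refine ⟨p, ?_, ?_⟩
  · obtain ⟨a, b, hab⟩ := exists_adj_of_mim_pos (hk.trans_le ht)
    have hside := (cutGraph_adj_iff.mp (f.map_adj_iff.mpr hab)).2
    simp only [f, cutGraphEmbedding, RelEmbedding.coe_mk, RelEmbedding.coe_toEmbedding,
      copyEmbedding_apply] at hside
    by_cases ha : (σ (Lcopy j a) : ℕ) < p
    · exact ⟨a, b, ha, by omega⟩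
    · exact ⟨b, a, by omega, by omega⟩
  · intro x y hxy hx hy
    by_contra hside
    have hfar : ∀ z ∉ Lbranch k j, ∀ a,
        z ≠ f a ∧ ¬ (cutGraph (Lgraph (k + 1)) σ p).Adj z (f a) := by
      intro z hz a
      refine ⟨fun h => hz (.inr ⟨a, h.symm⟩), fun h => ?_⟩
      rcases Lgraph_adj_copy_iff.mp (cutGraph_adj_iff.mp h).1.symm with ⟨b, hb, -⟩ | ⟨-, hb⟩
      exacts [hz (.inr ⟨b, hb.symm⟩), hz (.inl hb)]
    have := mim_add_one_le f (cutGraph_adj_iff.mpr ⟨hxy, hside⟩) (hfar x hx) (hfar y hy)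
    have := mim_cutGraph_le_mw (G := Lgraph (k + 1)) (σ := σ) p
    omega

lemma Lcopy_lt_iff_Lroot_lt {j : Fin 3} {p : ℕ}
    (hp : ∀ x y, (Lgraph (k + 1)).Adj x y → x ∉ Lbranch k j → y ∉ Lbranch k j →
      ((σ x : ℕ) < p ↔ (σ y : ℕ) < p))
    {i : Fin 3} (hij : i ≠ j) (a : LV k) :
    (σ (Lcopy i a) : ℕ) < p ↔ (σ (Lroot (k + 1)) : ℕ) < p := by
  have hcopy (b : LV k) : Lcopy i b ∉ Lbranch k j := by simp [Lbranch, hij.symm]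
  have hchild : Lchild k i ∉ Lbranch k j := by simp [Lbranch, hij]
  have hroot : Lroot (k + 1) ∉ Lbranch k j := by simp [Lbranch]
  calc (σ (Lcopy i a) : ℕ) < p ↔ (σ (Lcopy i (Lroot k)) : ℕ) < p :=
        (iff_of_reachable (fun b c hbc => hp _ _ (Lcopy_adj_Lcopy.mpr hbc) (hcopy b) (hcopy c))
          (Lgraph_reachable_Lroot k a)).symm
    _ ↔ (σ (Lchild k i) : ℕ) < p :=
        (hp _ _ (Lgraph_adj_child_iff.mpr (.inr rfl)) hchild (hcopy _)).symm
    _ ↔ (σ (Lroot (k + 1)) : ℕ) < p :=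
        (hp _ _ (Lgraph_adj_root_iff.mpr ⟨i, rfl⟩) hroot hchild).symm

end LowerBound

lemma le_mw_Lgraph : ∀ (k : ℕ) (σ : LV k ≃ Fin (Fintype.card (LV k))), k ≤ mw (Lgraph k) σ
  | 0, _ => Nat.zero_le _
  | 1, _ => one_le_mw_of_adj (Lgraph_adj_root_iff.mpr ⟨0, rfl⟩)
  | k + 2, σ => by
    by_contra! hσ
    choose p hsplit hout using
      exists_cut_splitting_Lcopy k.succ_pos (le_mw_Lgraph (k + 1)) (Nat.le_of_lt_succ hσ)
    obtain ⟨j₁, j₂, hne, hsame⟩ := Fintype.exists_ne_map_eq_of_card_lt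
      (fun j => decide ((σ (Lroot (k + 1 + 1)) : ℕ) < p j)) (by simp)
    simp only [decide_eq_decide] at hsame
    obtain ⟨a₁, b₁, ha₁, hb₁⟩ := hsplit j₁
    obtain ⟨a₂, b₂, ha₂, hb₂⟩ := hsplit j₂
    have := Lcopy_lt_iff_Lroot_lt (hout j₁) hne.symm a₂
    have := Lcopy_lt_iff_Lroot_lt (hout j₁) hne.symm b₂
    have := Lcopy_lt_iff_Lroot_lt (hout j₂) hne a₁
    have := Lcopy_lt_iff_Lroot_lt (hout j₂) hne b₁
    omega

/-- For every `k ≥ 0`, the tree `L k` has linear MIM-width exactly `k`. -/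
theorem lmw_Lgraph (k : ℕ) : lmw (Lgraph k) = k := by
  obtain ⟨σ, hσ⟩ := exists_layout_mw_le k
  exact le_antisymm (lmw_le hσ) (le_lmw (le_mw_Lgraph k))

end LMW
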